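/- Let G be a finite simple graph, w a positive edge-weight function with the unique hop-minimal shortest-path property, and s, u vertices connected in G with s ≠ u; write π = π_G(s,u). Let e₁, e₂ be edges of π such that s and u are connected in G∖e₁ and in G∖e₂, let P₁ = π_{G∖e₁}(s,u) and P₂ = π_{G∖e₂}(s,u), and assume that the last edge of P₁ and the last edge of P₂ are distinct and that neither of them lies in T₀(s). For k = 1, 2, let b_k be the last vertex along P_k (in order from s to u) that lies on π and differs from u, and let P′_k be the suffix of P_k from b_k to u. Then P′₁ and P′₂ have no vertex in common other than u. -/

import Mathlib

open SimpleGraph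

/-- The total `w`-weight of a walk. -/
def walkWeight {V : Type*} {G : SimpleGraph V} (w : Sym2 V → ℝ) {u v : V}
    (p : G.Walk u v) : ℝ :=
  (p.edges.map w).sum

/-- `p` is a `w`-shortest path from `u` to `v` in `H`. (When `w` has the unique
hop-minimal shortest-path property, such a path is the unique path `π_H(u,v)`.) -/
def IsMinPath {V : Type*} (H : SimpleGraph V) (w : Sym2 V → ℝ) {u v : V}
    (p : H.Walk u v) : Prop :=
  p.IsPath ∧ ∀ q : H.Walk u v, q.IsPath → walkWeight w p ≤ walkWeight w q

/-- `w` has the unique hop-minimal shortest-path property on `G`. -/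
def UniqueHopMinimal {V : Type*} (G : SimpleGraph V) (w : Sym2 V → ℝ) : Prop :=
  ∀ H : SimpleGraph V, H ≤ G → ∀ u v : V, H.Reachable u v →
    ∃ p : H.Walk u v, p.IsPath ∧
      (∀ q : H.Walk u v, q.IsPath → q ≠ p → walkWeight w p < walkWeight w q) ∧
      (∀ q : H.Walk u v, q.IsPath → p.length ≤ q.length)

/-- `T₀(s)`: the set of edges lying on some `w`-shortest path from `s` in `G`. -/
def bfsEdges {V : Type*} (G : SimpleGraph V) (w : Sym2 V → ℝ) (s : V) : Set (Sym2 V) :=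
  {e | ∃ (v : V) (p : G.Walk s v), IsMinPath G w p ∧ e ∈ p.edges}

section Helpers

variable {V : Type*} {G : SimpleGraph V}

lemma getLast?_cons_of_ne' {α : Type*} {a : α} {l : List α} (h : l ≠ []) :
    (a :: l).getLast? = l.getLast? := by
  cases l with
  | nil => simp at h
  | cons b t => exact List.getLast?_cons_cons

lemma edges_dropUntil_sublist' [DecidableEq V] {a b c : V} (p : G.Walk a b) (h : c ∈ p.support) :
    List.Sublist (p.dropUntil c h).edges p.edges := by
  conv_rhs => rw [← p.take_spec h]
  rw [Walk.edges_append]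
  exact List.sublist_append_right _ _

lemma edges_bypass_sublist' [DecidableEq V] {a b : V} (p : G.Walk a b) :
    List.Sublist p.bypass.edges p.edges := by
  induction p with
  | nil => simp [Walk.bypass]
  | cons h q ih =>
    simp only [Walk.bypass]
    split_ifs with hs
    · exact ((edges_dropUntil_sublist' _ hs).trans ih).trans (List.sublist_cons_self _ _)
    · rw [Walk.edges_cons, Walk.edges_cons]
      exact ih.cons₂ _

lemma end_mem_lastEdge' {u : V} : ∀ {x : V} (p : G.Walk x u) {e : Sym2 V},
    p.edges.getLast? = some e → u ∈ e := by
  intro x p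
  induction p with
  | nil => simp
  | @cons x y u h q ih =>
    cases q with
    | nil => intro e he; simp at he; subst he; simp
    | cons h' q' =>
      intro e he
      rw [Walk.edges_cons, Walk.edges_cons, List.getLast?_cons_cons] at he
      exact ih (by rw [Walk.edges_cons]; exact he)

lemma lastEdge_of_end_mem' {u : V} {e : Sym2 V} : ∀ {x : V} (p : G.Walk x u),
    p.IsPath → x ≠ u → e ∈ p.edges → u ∈ e → p.edges.getLast? = some e := by
  intro x p
  induction p with
  | nil => simp
  | @cons x y u h q ih =>
    intro hp hxu he hu
    by_cases hyu : y = u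
    · subst hyu
      have : q = Walk.nil := Walk.isPath_iff_eq_nil.mp hp.of_cons
      subst this
      simp only [Walk.edges_cons, Walk.edges_nil] at he ⊢
      simp at he
      simp [he]
    · have hqne : q.edges ≠ [] := by
        intro h0
        have : q.length = 0 := by rw [← Walk.length_edges, h0]; rfl
        exact hyu (Walk.eq_of_length_eq_zero this)
      rw [Walk.edges_cons] at he ⊢
      rw [getLast?_cons_of_ne' hqne]
      rcases List.mem_cons.mp he with rfl | he'
      · rcases Sym2.mem_iff.mp hu with rfl | rfl
        · exact absurd rfl hxu
        · exact absurd rfl hyu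
      · exact ih hp.of_cons hyu he' hu

lemma end_not_mem_of_prefix' {s c u : V} {p : G.Walk s u} (hp : p.IsPath)
    {q : G.Walk s c} {r : G.Walk c u} (hpr : p = q.append r) (hcu : c ≠ u) :
    u ∉ q.support := by
  have hmem : u ∈ r.support.tail := by
    cases r with
    | nil => exact absurd rfl hcu
    | cons h' q' => simpa using q'.end_mem_support
  have hnd := hp.support_nodup
  rw [hpr, Walk.support_append] at hnd
  intro hu
  exact (List.disjoint_of_nodup_append hnd) hu hmem

lemma mem_support_of_mem_edges_gen' {a b : V} (p : G.Walk a b) :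
    ∀ e ∈ p.edges, ∀ v ∈ e, v ∈ p.support := by
  intro e
  induction e using Sym2.ind with
  | _ x y =>
    intro he v hv
    rcases Sym2.mem_iff.mp hv with rfl | rfl
    · exact p.fst_mem_support_of_mem_edges he
    · exact p.snd_mem_support_of_mem_edges he

lemma sym2_end_mem' {a b : V} : ∀ {e : Sym2 V}, ¬ e.IsDiag →
    (∀ v ∈ e, v = a ∨ v = b) → b ∈ e := by
  intro e
  induction e using Sym2.ind with
  | _ x y =>
    intro hd h
    have hxy : x ≠ y := by simpa [Sym2.mk_isDiag_iff] using hd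
    rcases h x (Sym2.mem_mk_left x y) with rfl | rfl
    · rcases h y (Sym2.mem_mk_right x y) with rfl | rfl
      · exact absurd rfl hxy
      · exact Sym2.mem_mk_right _ _
    · exact Sym2.mem_mk_left _ _

lemma walkWeight_append' {w : Sym2 V → ℝ} {a b c : V} (p : G.Walk a b) (q : G.Walk b c) :
    walkWeight w (p.append q) = walkWeight w p + walkWeight w q := by
  simp [walkWeight, Walk.edges_append]

lemma walkWeight_transfer' {w : Sym2 V → ℝ} {a b : V} (p : G.Walk a b)
    {H : SimpleGraph V} (hp : ∀ e ∈ p.edges, e ∈ H.edgeSet) :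
    walkWeight w (p.transfer H hp) = walkWeight w p := by
  simp [walkWeight, Walk.edges_transfer]

lemma walkWeight_bypass_le' [DecidableEq V] {w : Sym2 V → ℝ}
    (hpos : ∀ e ∈ G.edgeSet, 0 ≤ w e) {a b : V} (p : G.Walk a b) :
    walkWeight w p.bypass ≤ walkWeight w p := by
  refine List.Sublist.sum_le_sum ((edges_bypass_sublist' p).map w) ?_
  intro r hr
  obtain ⟨e, he, rfl⟩ := List.mem_map.mp hr
  exact hpos e (p.edges_subset_edgeSet he)

end Helpers

/-- Let `π = π_G(s,u)`, let `P₁`, `P₂` be replacement paths for failed edges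
`e₁, e₂ ∈ π` whose last edges are distinct and not in `T₀(s)`, and for `k = 1, 2`
let `b_k` be the last vertex of `P_k` lying on `π` and different from `u`, with
`P'_k` the suffix of `P_k` from `b_k` to `u`.  Then `P'₁` and `P'₂` share no vertex
other than `u`. -/
theorem truncated_replacement_paths_disjoint {V : Type*} [Fintype V]
    (G : SimpleGraph V) (w : Sym2 V → ℝ)
    (hpos : ∀ e ∈ G.edgeSet, 0 < w e) (huhm : UniqueHopMinimal G w)
    (s u : V) (hsu : s ≠ u)
    (π : G.Walk s u) (hπ : IsMinPath G w π)
    (e₁ e₂ : Sym2 V) (he₁ : e₁ ∈ π.edges) (he₂ : e₂ ∈ π.edges)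
    (P₁ : (G.deleteEdges {e₁}).Walk s u) (hP₁ : IsMinPath (G.deleteEdges {e₁}) w P₁)
    (P₂ : (G.deleteEdges {e₂}).Walk s u) (hP₂ : IsMinPath (G.deleteEdges {e₂}) w P₂)
    (l₁ l₂ : Sym2 V)
    (hl₁ : P₁.edges.getLast? = some l₁) (hl₂ : P₂.edges.getLast? = some l₂)
    (hl : l₁ ≠ l₂) (hl₁T : l₁ ∉ bfsEdges G w s) (hl₂T : l₂ ∉ bfsEdges G w s)
    (b₁ b₂ : V)
    (Q₁ : (G.deleteEdges {e₁}).Walk s b₁) (P₁' : (G.deleteEdges {e₁}).Walk b₁ u)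
    (Q₂ : (G.deleteEdges {e₂}).Walk s b₂) (P₂' : (G.deleteEdges {e₂}).Walk b₂ u)
    (hsplit₁ : P₁ = Q₁.append P₁') (hsplit₂ : P₂ = Q₂.append P₂')
    (hb₁π : b₁ ∈ π.support) (hb₁u : b₁ ≠ u)
    (hb₂π : b₂ ∈ π.support) (hb₂u : b₂ ≠ u)
    (hlast₁ : ∀ x ∈ P₁'.support, x ≠ b₁ → x ≠ u → x ∉ π.support)
    (hlast₂ : ∀ x ∈ P₂'.support, x ≠ b₂ → x ≠ u → x ∉ π.support) :
    ∀ x : V, x ∈ P₁'.support → x ∈ P₂'.support → x = u := by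
  classical
  intro x hx1 hx2
  by_contra hxu
  -- basic path facts
  have hP₁'p : P₁'.IsPath := by
    have h := hP₁.1; rw [hsplit₁] at h; exact h.of_append_right
  have hP₂'p : P₂'.IsPath := by
    have h := hP₂.1; rw [hsplit₂] at h; exact h.of_append_right
  -- decompositions
  set σ₁ : (G.deleteEdges {e₁}).Walk x u := P₁'.dropUntil x hx1 with hσ₁def
  set σ₂ : (G.deleteEdges {e₂}).Walk x u := P₂'.dropUntil x hx2 with hσ₂def
  set t₁ : (G.deleteEdges {e₁}).Walk s x := Q₁.append (P₁'.takeUntil x hx1) with ht₁def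
  set t₂ : (G.deleteEdges {e₂}).Walk s x := Q₂.append (P₂'.takeUntil x hx2) with ht₂def
  have hdec₁ : P₁ = t₁.append σ₁ := by
    rw [hsplit₁, ht₁def, ← Walk.append_assoc, Walk.take_spec]
  have hdec₂ : P₂ = t₂.append σ₂ := by
    rw [hsplit₂, ht₂def, ← Walk.append_assoc, Walk.take_spec]
  have hσ₁p : σ₁.IsPath := hP₁'p.dropUntil _
  have hσ₂p : σ₂.IsPath := hP₂'p.dropUntil _
  have hσ₁ne : σ₁.edges ≠ [] := by
    intro h0
    exact hxu (Walk.eq_of_length_eq_zero (by rw [← Walk.length_edges, h0]; rfl))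
  have hσ₂ne : σ₂.edges ≠ [] := by
    intro h0
    exact hxu (Walk.eq_of_length_eq_zero (by rw [← Walk.length_edges, h0]; rfl))
  have hl₁σ : σ₁.edges.getLast? = some l₁ := by
    have h := hl₁
    rw [hdec₁, Walk.edges_append, List.getLast?_append_of_ne_nil _ hσ₁ne] at h
    exact h
  have hl₂σ : σ₂.edges.getLast? = some l₂ := by
    have h := hl₂
    rw [hdec₂, Walk.edges_append, List.getLast?_append_of_ne_nil _ hσ₂ne] at h
    exact h
  have hπedge : ∀ {f : Sym2 V}, f ∈ π.edges → f ∈ bfsEdges G w s :=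
    fun hf => ⟨u, π, hπ, hf⟩
  -- the suffixes avoid all edges of π
  have havoid₁ : ∀ f ∈ π.edges, f ∉ σ₁.edges := by
    intro f hfπ hfσ
    have hfd : ¬ f.IsDiag := G.not_isDiag_of_mem_edgeSet (π.edges_subset_edgeSet hfπ)
    have hforall : ∀ v ∈ f, v = b₁ ∨ v = u := by
      intro v hv
      have hvP' : v ∈ P₁'.support :=
        Walk.support_dropUntil_subset _ _ (mem_support_of_mem_edges_gen' σ₁ f hfσ v hv)
      have hvπ : v ∈ π.support := mem_support_of_mem_edges_gen' π f hfπ v hv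
      by_contra hcon
      push_neg at hcon
      exact hlast₁ v hvP' hcon.1 hcon.2 hvπ
    have huf : u ∈ f := sym2_end_mem' hfd hforall
    have h := lastEdge_of_end_mem' σ₁ hσ₁p hxu hfσ huf
    rw [hl₁σ] at h
    exact hl₁T (Option.some.inj h ▸ hπedge hfπ)
  have havoid₂ : ∀ f ∈ π.edges, f ∉ σ₂.edges := by
    intro f hfπ hfσ
    have hfd : ¬ f.IsDiag := G.not_isDiag_of_mem_edgeSet (π.edges_subset_edgeSet hfπ)
    have hforall : ∀ v ∈ f, v = b₂ ∨ v = u := by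
      intro v hv
      have hvP' : v ∈ P₂'.support :=
        Walk.support_dropUntil_subset _ _ (mem_support_of_mem_edges_gen' σ₂ f hfσ v hv)
      have hvπ : v ∈ π.support := mem_support_of_mem_edges_gen' π f hfπ v hv
      by_contra hcon
      push_neg at hcon
      exact hlast₂ v hvP' hcon.1 hcon.2 hvπ
    have huf : u ∈ f := sym2_end_mem' hfd hforall
    have h := lastEdge_of_end_mem' σ₂ hσ₂p hxu hfσ huf
    rw [hl₂σ] at h
    exact hl₂T (Option.some.inj h ▸ hπedge hfπ)
  -- transfers
  have htr₁ : ∀ f ∈ σ₁.edges, f ∈ (G.deleteEdges {e₂}).edgeSet := by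
    intro f hf
    rw [SimpleGraph.edgeSet_deleteEdges]
    refine ⟨SimpleGraph.edgeSet_mono (SimpleGraph.deleteEdges_le _) (σ₁.edges_subset_edgeSet hf), ?_⟩
    simp only [Set.mem_singleton_iff]
    intro hfe
    exact havoid₁ e₂ he₂ (hfe ▸ hf)
  have htr₂ : ∀ f ∈ σ₂.edges, f ∈ (G.deleteEdges {e₁}).edgeSet := by
    intro f hf
    rw [SimpleGraph.edgeSet_deleteEdges]
    refine ⟨SimpleGraph.edgeSet_mono (SimpleGraph.deleteEdges_le _) (σ₂.edges_subset_edgeSet hf), ?_⟩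
    simp only [Set.mem_singleton_iff]
    intro hfe
    exact havoid₂ e₁ he₁ (hfe ▸ hf)
  set R₁ : (G.deleteEdges {e₂}).Walk s u := t₂.append (σ₁.transfer _ htr₁) with hR₁def
  set R₂ : (G.deleteEdges {e₁}).Walk s u := t₁.append (σ₂.transfer _ htr₂) with hR₂def
  -- weights
  have hnn2 : ∀ f ∈ (G.deleteEdges {e₂}).edgeSet, 0 ≤ w f := fun f hf =>
    le_of_lt (hpos f (SimpleGraph.edgeSet_mono (SimpleGraph.deleteEdges_le _) hf))
  have hnn1 : ∀ f ∈ (G.deleteEdges {e₁}).edgeSet, 0 ≤ w f := fun f hf =>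
    le_of_lt (hpos f (SimpleGraph.edgeSet_mono (SimpleGraph.deleteEdges_le _) hf))
  have hwP₁ : walkWeight w P₁ = walkWeight w t₁ + walkWeight w σ₁ := by
    rw [hdec₁, walkWeight_append']
  have hwP₂ : walkWeight w P₂ = walkWeight w t₂ + walkWeight w σ₂ := by
    rw [hdec₂, walkWeight_append']
  have hwR₁ : walkWeight w R₁ = walkWeight w t₂ + walkWeight w σ₁ := by
    rw [hR₁def, walkWeight_append', walkWeight_transfer']
  have hwR₂ : walkWeight w R₂ = walkWeight w t₁ + walkWeight w σ₂ := by
    rw [hR₂def, walkWeight_append', walkWeight_transfer']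
  have hb₁le : walkWeight w R₁.bypass ≤ walkWeight w R₁ := walkWeight_bypass_le' hnn2 R₁
  have hb₂le : walkWeight w R₂.bypass ≤ walkWeight w R₂ := walkWeight_bypass_le' hnn1 R₂
  have hineq₁ : walkWeight w P₂ ≤ walkWeight w R₁.bypass := hP₂.2 _ (Walk.bypass_isPath R₁)
  have hineq₂ : walkWeight w P₁ ≤ walkWeight w R₂.bypass := hP₁.2 _ (Walk.bypass_isPath R₂)
  have heq : walkWeight w σ₁ = walkWeight w σ₂ := by
    have h1 : walkWeight w σ₂ ≤ walkWeight w σ₁ := by linarith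
    have h2 : walkWeight w σ₁ ≤ walkWeight w σ₂ := by linarith
    linarith
  -- strict uniqueness of P₂ in G \ e₂
  obtain ⟨p₀, hp₀, hstrict, -⟩ :=
    huhm (G.deleteEdges {e₂}) (SimpleGraph.deleteEdges_le _) s u ⟨P₂⟩
  have hP₂eq : P₂ = p₀ := by
    by_contra hne
    exact absurd (hP₂.2 p₀ hp₀) (not_le.mpr (hstrict P₂ hP₂.1 hne))
  have hB : R₁.bypass = P₂ := by
    by_contra hne
    have hlt := hstrict R₁.bypass (Walk.bypass_isPath R₁) (by rw [← hP₂eq]; exact hne)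
    rw [← hP₂eq] at hlt
    linarith
  -- final contradiction via last edges
  have hul₂ : u ∈ l₂ := end_mem_lastEdge' P₂ hl₂
  have hl₂R : l₂ ∈ R₁.edges := by
    refine (edges_bypass_sublist' R₁).subset ?_
    rw [hB]
    exact List.mem_of_getLast? hl₂
  rw [hR₁def, Walk.edges_append, Walk.edges_transfer] at hl₂R
  rcases List.mem_append.mp hl₂R with hmem | hmem
  · have : u ∈ t₂.support := mem_support_of_mem_edges_gen' t₂ l₂ hmem u hul₂
    exact end_not_mem_of_prefix' hP₂.1 hdec₂ hxu this
  · have h := lastEdge_of_end_mem' σ₁ hσ₁p hxu hmem hul₂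
    rw [hl₁σ] at h
    exact hl (Option.some.inj h)
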